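/- arXiv:2011.07192 — 2 statements merged into one kernel-verified Lean document; each statement's English description precedes it below -/
import Mathlib

section
/- For β > 1 and D̃ > 0, with γ₊ = (−β−D̃+√(β²+2(β−2)D̃+D̃²))/2, one has D̃(1+γ₊) + βγ₊ < 0. -/
/-!
Write `S = β + D`. The discriminant is `Δ = S² - 4D ≥ (1 + D)² - 4D ≥ 0`, so
`γ₊ = (-S + √Δ) / 2` is a genuine root of `γ² + Sγ + D`. Hence
`D(1 + γ₊) + βγ₊ = D + Sγ₊ = -γ₊²`, and `γ₊ ≠ 0` because `D ≠ 0`.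
-/

lemma quadratic_root_add_sqrt_discrim {b c x : ℝ} (h : 0 ≤ discrim 1 b c)
    (hx : x = (-b + √(discrim 1 b c)) / 2) : x ^ 2 + b * x + c = 0 := by
  have hs : discrim 1 b c = √(discrim 1 b c) * √(discrim 1 b c) :=
    (Real.mul_self_sqrt h).symm
  have := (quadratic_eq_zero_iff one_ne_zero hs x).2 (Or.inl (by rw [hx, mul_one]))
  linear_combination this

lemma add_mul_quadratic_root_neg {b c x : ℝ} (h : 0 ≤ discrim 1 b c) (hc : c ≠ 0)
    (hx : x = (-b + √(discrim 1 b c)) / 2) : c + b * x < 0 := by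
  have hroot := quadratic_root_add_sqrt_discrim h hx
  have hx0 : x ≠ 0 := by
    rintro rfl
    simp [hc] at hroot
  calc c + b * x = -x ^ 2 := by linear_combination hroot
    _ < 0 := neg_neg_of_pos (by positivity)

lemma discrim_add_nonneg {β D : ℝ} (hβ : 1 ≤ β) (hD : 0 ≤ D) :
    0 ≤ discrim 1 (β + D) D := by
  unfold discrim
  nlinarith [sq_nonneg (1 - D)]

/-- For β > 1 and D̃ > 0, with γ₊ = (−β−D̃+√(β²+2(β−2)D̃+D̃²))/2,
one has D̃(1+γ₊) + βγ₊ < 0. -/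
theorem Gplus_sign (β D : ℝ) (hβ : 1 < β) (hD : 0 < D) :
    D * (1 + (-β - D + Real.sqrt (β ^ 2 + 2 * (β - 2) * D + D ^ 2)) / 2)
      + β * ((-β - D + Real.sqrt (β ^ 2 + 2 * (β - 2) * D + D ^ 2)) / 2) < 0 := by
  have hΔ : β ^ 2 + 2 * (β - 2) * D + D ^ 2 = discrim 1 (β + D) D := by
    unfold discrim; ring
  have key := add_mul_quadratic_root_neg (discrim_add_nonneg hβ.le hD.le) hD.ne' rfl
  rw [hΔ]
  linear_combination key
end

section
/- For β > 1 and D̃ > 0, with γ₋ = (−β−D̃−√(β²+2(β−2)D̃+D̃²))/2, one has D̃(1+γ₋) + βγ₋ < 0; consequently, since 1+γ₋ < 0, the quantity (D̃(1+γ₋)+βγ₋)/(1+γ₋) is positive. -/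
/-!
γ₋ is the smaller root of `X² + (β + D̃) X + D̃`, whose discriminant is
`Δ = (β + D̃ - 2)² + 4 (β - 1)`. Hence `D̃ (1 + γ₋) + β γ₋ = -γ₋²`, and
`√Δ > |β + D̃ - 2|` gives `1 + γ₋ < 0`, so both numerator and denominator are negative.
-/

open Real

noncomputable def gammaMinus (β D : ℝ) : ℝ :=
  (-β - D - √(β ^ 2 + 2 * (β - 2) * D + D ^ 2)) / 2

theorem discr_eq_sq_add (β D : ℝ) :
    β ^ 2 + 2 * (β - 2) * D + D ^ 2 = (β + D - 2) ^ 2 + 4 * (β - 1) := by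
  ring

section

variable {β : ℝ} (D : ℝ)

theorem gammaMinus_isRoot (hβ : 1 ≤ β) :
    gammaMinus β D ^ 2 + (β + D) * gammaMinus β D + D = 0 := by
  have hΔ : 0 ≤ β ^ 2 + 2 * (β - 2) * D + D ^ 2 := by
    rw [discr_eq_sq_add]; nlinarith [sq_nonneg (β + D - 2)]
  have hs := sq_sqrt hΔ
  unfold gammaMinus
  linear_combination hs / 4

theorem one_add_gammaMinus_neg (hβ : 1 < β) : 1 + gammaMinus β D < 0 := by
  have hlt : |β + D - 2| < √(β ^ 2 + 2 * (β - 2) * D + D ^ 2) := by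
    rw [lt_sqrt (abs_nonneg _), sq_abs, discr_eq_sq_add]
    linarith
  have := neg_abs_le (β + D - 2)
  unfold gammaMinus
  linarith

theorem mul_one_add_gammaMinus_add_eq_neg_sq (hβ : 1 ≤ β) :
    D * (1 + gammaMinus β D) + β * gammaMinus β D = -gammaMinus β D ^ 2 := by
  linear_combination gammaMinus_isRoot D hβ

end

theorem Gminus_sign_general (β D : ℝ) (hβ : 1 < β) :
    D * (1 + (-β - D - Real.sqrt (β ^ 2 + 2 * (β - 2) * D + D ^ 2)) / 2)
        + β * ((-β - D - Real.sqrt (β ^ 2 + 2 * (β - 2) * D + D ^ 2)) / 2) < 0 ∧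
    0 < (D * (1 + (-β - D - Real.sqrt (β ^ 2 + 2 * (β - 2) * D + D ^ 2)) / 2)
          + β * ((-β - D - Real.sqrt (β ^ 2 + 2 * (β - 2) * D + D ^ 2)) / 2))
        / (1 + (-β - D - Real.sqrt (β ^ 2 + 2 * (β - 2) * D + D ^ 2)) / 2) := by
  change D * (1 + gammaMinus β D) + β * gammaMinus β D < 0 ∧
    0 < (D * (1 + gammaMinus β D) + β * gammaMinus β D) / (1 + gammaMinus β D)
  have hden := one_add_gammaMinus_neg D hβ
  have hnum : D * (1 + gammaMinus β D) + β * gammaMinus β D < 0 := by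
    rw [mul_one_add_gammaMinus_add_eq_neg_sq D hβ.le, neg_neg_iff_pos]
    exact sq_pos_of_neg (by linarith)
  exact ⟨hnum, div_pos_of_neg_of_neg hnum hden⟩

/-- For β > 1 and D̃ > 0, with γ₋ = (−β−D̃−√(β²+2(β−2)D̃+D̃²))/2, one has
D̃(1+γ₋) + βγ₋ < 0; consequently, since 1+γ₋ < 0, the quantity
(D̃(1+γ₋)+βγ₋)/(1+γ₋) is positive. -/
theorem Gminus_sign (β D : ℝ) (hβ : 1 < β) (hD : 0 < D) :
    D * (1 + (-β - D - Real.sqrt (β ^ 2 + 2 * (β - 2) * D + D ^ 2)) / 2)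
        + β * ((-β - D - Real.sqrt (β ^ 2 + 2 * (β - 2) * D + D ^ 2)) / 2) < 0 ∧
    0 < (D * (1 + (-β - D - Real.sqrt (β ^ 2 + 2 * (β - 2) * D + D ^ 2)) / 2)
          + β * ((-β - D - Real.sqrt (β ^ 2 + 2 * (β - 2) * D + D ^ 2)) / 2))
        / (1 + (-β - D - Real.sqrt (β ^ 2 + 2 * (β - 2) * D + D ^ 2)) / 2) :=
  Gminus_sign_general β D hβ
end
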